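/- Let φ : R → Q be an injective ring epimorphism with Q flat as a left R-module, K = Q/φ(R). Then for every torsion right R-module M (i.e., M ⊗_R Q = 0), the canonical map π : Hom_R(K, M) ⊗_R K → h(M) defined by π(f ⊗ x) = f(x) is a surjective homomorphism of right R-modules, where h(M) is the largest h-divisible submodule of M. -/

import Mathlib

open MulOpposite

universe u

/-- `φ : R →+* Q` is an epimorphism in the category of rings. -/
def IsRingEpi {R Q : Type u} [Ring R] [Ring Q] (φ : R →+* Q) : Prop :=
  ∀ (T : Type u) [Ring T] (ψ ω : Q →+* T), ψ.comp φ = ω.comp φ → ψ = ω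

section NCTensor

variable (R : Type u) [Ring R] (M : Type u) [AddCommGroup M] [Module Rᵐᵒᵖ M]
  (N : Type u) [AddCommGroup N] [Module R N]

/-- Relations defining the tensor product `M ⊗_R N` of a right `R`-module `M`
and a left `R`-module `N` over a (possibly noncommutative) ring `R`. -/
def ncRels : AddSubgroup (FreeAbelianGroup (M × N)) :=
  AddSubgroup.closure
    ({x | ∃ m m' n, x = FreeAbelianGroup.of (m + m', n) - FreeAbelianGroup.of (m, n) -
        FreeAbelianGroup.of (m', n)} ∪
     {x | ∃ m n n', x = FreeAbelianGroup.of (m, n + n') - FreeAbelianGroup.of (m, n) -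
        FreeAbelianGroup.of (m, n')} ∪
     {x | ∃ (r : R) (m : M) (n : N), x = FreeAbelianGroup.of (op r • m, n) -
        FreeAbelianGroup.of (m, r • n)})

/-- The tensor product `M ⊗_R N` of a right `R`-module and a left `R`-module over a
(possibly noncommutative) ring `R`, as an abelian group. -/
def NCTensor : Type u := FreeAbelianGroup (M × N) ⧸ ncRels R M N

instance : AddCommGroup (NCTensor R M N) :=
  QuotientAddGroup.Quotient.addCommGroup _

/-- The pure tensor `m ⊗ n` in `M ⊗_R N`. -/
def NCTensor.tmul (m : M) (n : N) : NCTensor R M N :=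
  QuotientAddGroup.mk (FreeAbelianGroup.of (m, n))

end NCTensor

/-- A left `R`-module `N` is flat if tensoring right `R`-modules with `N`
preserves injectivity. -/
def IsFlatLeftModule (R : Type u) [Ring R] (N : Type u) [AddCommGroup N] [Module R N] : Prop :=
  ∀ (A B : Type u) [AddCommGroup A] [AddCommGroup B] [Module Rᵐᵒᵖ A] [Module Rᵐᵒᵖ B]
    (i : A →ₗ[Rᵐᵒᵖ] B), Function.Injective i →
    ∀ g : NCTensor R A N →+ NCTensor R B N,
      (∀ a n, g (NCTensor.tmul R A N a n) = NCTensor.tmul R B N (i a) n) →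
      Function.Injective g

section Kmod

variable {R Q : Type u} [Ring R] [Ring Q] (φ : R →+* Q) [Module Rᵐᵒᵖ Q]
  (hr : ∀ (r : R) (q : Q), op r • q = q * φ r)

/-- The image of `φ`, as a submodule of the right `R`-module `Q`. -/
def phiRange : Submodule Rᵐᵒᵖ Q where
  carrier := Set.range φ
  add_mem' := by rintro x y ⟨a, rfl⟩ ⟨b, rfl⟩; exact ⟨a + b, map_add φ a b⟩
  zero_mem' := ⟨0, map_zero φ⟩
  smul_mem' := by
    rintro c x ⟨a, rfl⟩
    refine ⟨a * c.unop, ?_⟩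
    rw [map_mul]
    conv_rhs => rw [← MulOpposite.op_unop c, hr]

/-- `K = Q/φ(R)` as a right `R`-module. -/
abbrev Kmod := Q ⧸ phiRange φ hr

end Kmod

section Kleft

variable {R Q : Type u} [Ring R] [Ring Q] (φ : R →+* Q) [Module Rᵐᵒᵖ Q]
  (hr : ∀ (r : R) (q : Q), op r • q = q * φ r)

/-- Left multiplication by `φ r` on `Q`, as an endomorphism of the right `R`-module `Q`. -/
def lmulQ (r : R) : Q →ₗ[Rᵐᵒᵖ] Q where
  toFun q := φ r * q
  map_add' := mul_add _
  map_smul' := by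
    intro c q
    simp only [RingHom.id_apply]
    conv_lhs => rw [← MulOpposite.op_unop c, hr]
    conv_rhs => rw [← MulOpposite.op_unop c, hr]
    rw [mul_assoc]

/-- Left multiplication by `φ r` on `K = Q/φ(R)`. -/
def lK (r : R) : Kmod φ hr →ₗ[Rᵐᵒᵖ] Kmod φ hr :=
  Submodule.mapQ _ _ (lmulQ φ hr r) (by
    rintro x ⟨a, rfl⟩
    exact ⟨r * a, by simp [lmulQ, map_mul]⟩)

/-- The left `R`-module structure on `K = Q/φ(R)` induced by left multiplication. -/
def KleftModule : Module R (Kmod φ hr) :=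
  letI : SMul R (Kmod φ hr) := ⟨fun r k => lK φ hr r k⟩
  Module.ofMinimalAxioms
    (fun r x y => map_add (lK φ hr r) x y)
    (fun r s x => by
      obtain ⟨q, rfl⟩ := Submodule.Quotient.mk_surjective _ x
      show lK φ hr (r + s) (Submodule.Quotient.mk q) = _
      simp only [lK, Submodule.mapQ_apply, lmulQ, LinearMap.coe_mk, AddHom.coe_mk, map_add,
        add_mul]
      rfl)
    (fun r s x => by
      obtain ⟨q, rfl⟩ := Submodule.Quotient.mk_surjective _ x
      show lK φ hr (r * s) (Submodule.Quotient.mk q) = lK φ hr r (lK φ hr s _)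
      simp only [lK, Submodule.mapQ_apply, lmulQ, LinearMap.coe_mk, AddHom.coe_mk, map_mul,
        mul_assoc])
    (fun x => by
      obtain ⟨q, rfl⟩ := Submodule.Quotient.mk_surjective _ x
      show lK φ hr 1 (Submodule.Quotient.mk q) = _
      simp [lK, Submodule.mapQ_apply, lmulQ])

end Kleft

section HomMod

variable {R Q : Type u} [Ring R] [Ring Q] (φ : R →+* Q) [Module Rᵐᵒᵖ Q]
  (hr : ∀ (r : R) (q : Q), op r • q = q * φ r)
  (M : Type u) [AddCommGroup M] [Module Rᵐᵒᵖ M]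

/-- The right `R`-module structure on `Hom_R(K, M)` coming from the left action of `R` on `K`. -/
def homModule : Module Rᵐᵒᵖ (Kmod φ hr →ₗ[Rᵐᵒᵖ] M) :=
  letI : SMul Rᵐᵒᵖ (Kmod φ hr →ₗ[Rᵐᵒᵖ] M) := ⟨fun c f => f.comp (lK φ hr c.unop)⟩
  Module.ofMinimalAxioms
    (fun c f g => by
      refine LinearMap.ext fun k => ?_
      rfl)
    (fun c d f => by
      show f.comp (lK φ hr (c + d).unop) = f.comp (lK φ hr c.unop) + f.comp (lK φ hr d.unop)
      refine LinearMap.ext fun k => ?_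
      obtain ⟨q, rfl⟩ := Submodule.Quotient.mk_surjective _ k
      simp [lK, Submodule.mapQ_apply, lmulQ, MulOpposite.unop_add, map_add, add_mul])
    (fun c d f => by
      show f.comp (lK φ hr (c * d).unop) = (f.comp (lK φ hr d.unop)).comp (lK φ hr c.unop)
      refine LinearMap.ext fun k => ?_
      obtain ⟨q, rfl⟩ := Submodule.Quotient.mk_surjective _ k
      simp [lK, Submodule.mapQ_apply, lmulQ, map_mul, mul_assoc])
    (fun f => by
      show f.comp (lK φ hr (1 : Rᵐᵒᵖ).unop) = f
      refine LinearMap.ext fun k => ?_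
      obtain ⟨q, rfl⟩ := Submodule.Quotient.mk_surjective _ k
      simp [lK, Submodule.mapQ_apply, lmulQ])

end HomMod

/-!
Every `f ⊗ [q]` is sent to `g 1` for `g = f ∘ [q · -]`, so `π` lands in `h(M)`. Conversely let
`m = g 1`. Since `R/ann(m) ≅ mR ⊆ M` and `Q` is flat, `(R/ann(m)) ⊗ Q` embeds into `M ⊗ Q = 0`,
hence `Q = ann(m) Q`. Writing `1 = Σ φ(iₖ) uₖ` with `m iₖ = 0` gives
`m = Σ g (φ(iₖ) uₖ) = π (Σ fₖ ⊗ [uₖ])`, where `fₖ [q] = g (φ(iₖ) q)` is well defined on `K`.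
-/

namespace NCTensor

variable {R : Type u} [Ring R] {A B N : Type u} [AddCommGroup A] [Module Rᵐᵒᵖ A]
  [AddCommGroup B] [Module Rᵐᵒᵖ B] [AddCommGroup N] [Module R N] {T : Type*} [AddCommGroup T]

def lift (b : A →+ N →+ T) (hb : ∀ (r : R) (a : A) (n : N), b (op r • a) n = b a (r • n)) :
    NCTensor R A N →+ T :=
  QuotientAddGroup.lift _ (FreeAbelianGroup.lift fun p => b p.1 p.2) (by
    rw [ncRels, AddSubgroup.closure_le]
    rintro x ((⟨a, a', n, rfl⟩ | ⟨a, n, n', rfl⟩) | ⟨r, a, n, rfl⟩) <;>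
      simp [hb])

@[simp]
theorem lift_tmul (b : A →+ N →+ T) (hb) (a : A) (n : N) :
    lift b hb (tmul R A N a n) = b a n :=
  FreeAbelianGroup.lift_apply_of _ _

theorem tmul_add_left (a a' : A) (n : N) :
    tmul R A N (a + a') n = tmul R A N a n + tmul R A N a' n := by
  have h := (QuotientAddGroup.eq_zero_iff _).2
    (AddSubgroup.subset_closure (Or.inl (Or.inl ⟨a, a', n, rfl⟩)) :
      _ ∈ ncRels R A N)
  rwa [QuotientAddGroup.mk_sub, QuotientAddGroup.mk_sub, sub_sub, sub_eq_zero] at h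

theorem tmul_add_right (a : A) (n n' : N) :
    tmul R A N a (n + n') = tmul R A N a n + tmul R A N a n' := by
  have h := (QuotientAddGroup.eq_zero_iff _).2
    (AddSubgroup.subset_closure (Or.inl (Or.inr ⟨a, n, n', rfl⟩)) :
      _ ∈ ncRels R A N)
  rwa [QuotientAddGroup.mk_sub, QuotientAddGroup.mk_sub, sub_sub, sub_eq_zero] at h

theorem tmul_smul (r : R) (a : A) (n : N) :
    tmul R A N (op r • a) n = tmul R A N a (r • n) := by
  have h := (QuotientAddGroup.eq_zero_iff _).2
    (AddSubgroup.subset_closure (Or.inr ⟨r, a, n, rfl⟩) : _ ∈ ncRels R A N)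
  rwa [QuotientAddGroup.mk_sub, sub_eq_zero] at h

def tmulHom : A →+ N →+ NCTensor R A N :=
  AddMonoidHom.mk' (fun a => AddMonoidHom.mk' (tmul R A N a) (tmul_add_right a))
    fun a a' => AddMonoidHom.ext fun n => tmul_add_left a a' n

def map (i : A →ₗ[Rᵐᵒᵖ] B) : NCTensor R A N →+ NCTensor R B N :=
  lift (tmulHom.comp i.toAddMonoidHom) fun r a n => by
    simp [tmulHom, tmul_smul]

theorem map_tmul (i : A →ₗ[Rᵐᵒᵖ] B) (a : A) (n : N) :
    map i (tmul R A N a n) = tmul R B N (i a) n :=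
  lift_tmul _ _ a n

theorem range_le {F : NCTensor R A N →+ T} {S : AddSubgroup T}
    (hF : ∀ a n, F (tmul R A N a n) ∈ S) : F.range ≤ S := by
  rintro _ ⟨z, rfl⟩
  obtain ⟨w, rfl⟩ := QuotientAddGroup.mk'_surjective (ncRels R A N) z
  change (F.comp (QuotientAddGroup.mk' _)) w ∈ S
  induction w using FreeAbelianGroup.induction_on with
  | zero => rw [map_zero]; exact S.zero_mem
  | of p => exact hF p.1 p.2
  | neg p hp => rw [map_neg]; exact S.neg_mem hp
  | add x y hx hy => rw [map_add]; exact S.add_mem hx hy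

end NCTensor

theorem IsFlatLeftModule.subsingleton_of_injective {R N : Type u} [Ring R] [AddCommGroup N]
    [Module R N] (hN : IsFlatLeftModule R N) {A B : Type u} [AddCommGroup A] [Module Rᵐᵒᵖ A]
    [AddCommGroup B] [Module Rᵐᵒᵖ B] [Subsingleton (NCTensor R B N)] (i : A →ₗ[Rᵐᵒᵖ] B)
    (hi : Function.Injective i) : Subsingleton (NCTensor R A N) :=
  (hN A B i hi (NCTensor.map i) (NCTensor.map_tmul i)).subsingleton

section RightIdeal

variable {R N : Type u} [Ring R] [AddCommGroup N] [Module R N]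

/-- `I N` for a right ideal `I` of `R`, given as a left ideal of `Rᵐᵒᵖ`. -/
def rightIdealSMul (I : Ideal Rᵐᵒᵖ) (N : Type u) [AddCommGroup N] [Module R N] : AddSubgroup N :=
  AddSubgroup.closure {x | ∃ i ∈ I, ∃ n : N, x = unop i • n}

def quotSMulHom (I : Ideal Rᵐᵒᵖ) : (Rᵐᵒᵖ ⧸ I) →+ N →+ N ⧸ rightIdealSMul I N :=
  QuotientAddGroup.lift I.toAddSubgroup
    { toFun := fun a => (QuotientAddGroup.mk' _).comp (DistribSMul.toAddMonoidHom N (unop a))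
      map_zero' := by ext; simp
      map_add' := by intros; ext; simp [add_smul] }
    fun a ha => AddMonoidHom.ext fun n =>
      (QuotientAddGroup.eq_zero_iff _).2 (AddSubgroup.subset_closure ⟨a, ha, n, rfl⟩)

theorem quotSMulHom_mk (I : Ideal Rᵐᵒᵖ) (a : Rᵐᵒᵖ) (n : N) :
    quotSMulHom I (Submodule.Quotient.mk a) n = QuotientAddGroup.mk (unop a • n) := rfl

/-- Apply `(R/I) ⊗ N → N/IN`, `[a] ⊗ n ↦ a n`, to `[1] ⊗ n = 0`. -/
theorem mem_rightIdealSMul_of_subsingleton (I : Ideal Rᵐᵒᵖ)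
    [Subsingleton (NCTensor R (Rᵐᵒᵖ ⧸ I) N)] (n : N) : n ∈ rightIdealSMul I N := by
  let β := NCTensor.lift (quotSMulHom (N := N) I) fun (r : R) c n => by
    obtain ⟨a, rfl⟩ := Submodule.Quotient.mk_surjective _ c
    rw [← Submodule.Quotient.mk_smul, smul_eq_mul, quotSMulHom_mk, quotSMulHom_mk, unop_mul,
      unop_op, mul_smul]
  have h := congrArg β (Subsingleton.elim (NCTensor.tmul R _ N (Submodule.Quotient.mk 1) n) 0)
  rwa [NCTensor.lift_tmul, map_zero, quotSMulHom_mk, unop_one, one_smul,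
    QuotientAddGroup.eq_zero_iff] at h

end RightIdeal

theorem IsFlatLeftModule.mem_rightIdealSMul_torsionOf {R N M : Type u} [Ring R] [AddCommGroup N]
    [Module R N] [AddCommGroup M] [Module Rᵐᵒᵖ M] (hN : IsFlatLeftModule R N)
    [Subsingleton (NCTensor R M N)] (m : M) (n : N) :
    n ∈ rightIdealSMul (Ideal.torsionOf Rᵐᵒᵖ M m) N := by
  have : Subsingleton (NCTensor R (Rᵐᵒᵖ ⧸ Ideal.torsionOf Rᵐᵒᵖ M m) N) :=
    hN.subsingleton_of_injective _ <| LinearMap.ker_eq_bot.1 <|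
      Submodule.ker_liftQ_eq_bot' _ (LinearMap.toSpanSingleton Rᵐᵒᵖ M m) rfl
  exact mem_rightIdealSMul_of_subsingleton _ n

/-- `h(M)`, as the image of evaluation at `1` on `Hom_R(Q, M)`. -/
def hDivisiblePart (R Q M : Type u) [Ring R] [Ring Q] [Module Rᵐᵒᵖ Q] [AddCommGroup M]
    [Module Rᵐᵒᵖ M] : AddSubgroup M :=
  (LinearMap.evalAddMonoidHom (1 : Q) : (Q →ₗ[Rᵐᵒᵖ] M) →+ M).range

attribute [local instance] KleftModule homModule

section Kmod

variable {R Q : Type u} [Ring R] [Ring Q] {φ : R →+* Q} [Module Rᵐᵒᵖ Q]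
  (hr : ∀ (r : R) (q : Q), op r • q = q * φ r) (M : Type u) [AddCommGroup M] [Module Rᵐᵒᵖ M]

def mulLeftLinear (q : Q) : Q →ₗ[Rᵐᵒᵖ] Q where
  toFun p := q * p
  map_add' := mul_add q
  map_smul' c p := by
    rw [← op_unop c, hr, RingHom.id_apply, hr, mul_assoc]

variable {M}

theorem Kmod.exists_apply_one_eq (f : Kmod φ hr →ₗ[Rᵐᵒᵖ] M) (q : Q) :
    ∃ g : Q →ₗ[Rᵐᵒᵖ] M, g 1 = f (Submodule.Quotient.mk q) :=
  ⟨f ∘ₗ (phiRange φ hr).mkQ ∘ₗ mulLeftLinear hr q, by simp [mulLeftLinear]⟩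

/-- Well defined on `K = Q/φ(R)` since `g (φ i * φ a) = g 1 • op (i * a) = 0`. -/
def Kmod.homOfSMulEqZero (g : Q →ₗ[Rᵐᵒᵖ] M) {i : R} (hi : op i • g 1 = 0) :
    Kmod φ hr →ₗ[Rᵐᵒᵖ] M :=
  (phiRange φ hr).liftQ (g ∘ₗ mulLeftLinear hr (φ i)) <| by
    rintro _ ⟨a, rfl⟩
    have : φ i * φ a = op (i * a) • (1 : Q) := by rw [hr, one_mul, map_mul]
    simp [mulLeftLinear, this, mul_smul, hi]

variable (M)

def evalTensor : NCTensor R (Kmod φ hr →ₗ[Rᵐᵒᵖ] M) (Kmod φ hr) →+ M :=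
  NCTensor.lift LinearMap.toAddMonoidHom' fun _ _ _ => rfl

@[simp]
theorem evalTensor_tmul (f : Kmod φ hr →ₗ[Rᵐᵒᵖ] M) (x : Kmod φ hr) :
    evalTensor hr M (NCTensor.tmul R _ _ f x) = f x :=
  NCTensor.lift_tmul _ _ f x

theorem range_evalTensor_le : (evalTensor hr M).range ≤ hDivisiblePart R Q M :=
  NCTensor.range_le fun f x => by
    obtain ⟨q, rfl⟩ := Submodule.Quotient.mk_surjective _ x
    obtain ⟨g, hg⟩ := Kmod.exists_apply_one_eq hr f q
    exact ⟨g, by simp [hg]⟩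

theorem hDivisiblePart_le_range_evalTensor [Module R Q] (hl : ∀ (r : R) (q : Q), r • q = φ r * q)
    (hflat : IsFlatLeftModule R Q) [Subsingleton (NCTensor R M Q)] :
    hDivisiblePart R Q M ≤ (evalTensor hr M).range := by
  rintro _ ⟨g, rfl⟩
  have hle : rightIdealSMul (Ideal.torsionOf Rᵐᵒᵖ M (g 1)) Q ≤
      (evalTensor hr M).range.comap g.toAddMonoidHom := by
    refine (AddSubgroup.closure_le _).2 ?_
    rintro _ ⟨i, hi, u, rfl⟩
    exact ⟨NCTensor.tmul R _ _ (Kmod.homOfSMulEqZero hr g (i := unop i) hi)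
      (Submodule.Quotient.mk u), by simp [Kmod.homOfSMulEqZero, mulLeftLinear, hl]⟩
  exact hle (hflat.mem_rightIdealSMul_torsionOf (g 1) 1)

theorem range_evalTensor [Module R Q] (hl : ∀ (r : R) (q : Q), r • q = φ r * q)
    (hflat : IsFlatLeftModule R Q) [Subsingleton (NCTensor R M Q)] :
    (evalTensor hr M).range = hDivisiblePart R Q M :=
  le_antisymm (range_evalTensor_le hr M) (hDivisiblePart_le_range_evalTensor hr M hl hflat)

end Kmod

theorem canonical_map_onto_hM_general {R Q : Type u} [Ring R] [Ring Q] (φ : R →+* Q)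
    [Module Rᵐᵒᵖ Q] (hr : ∀ (r : R) (q : Q), op r • q = q * φ r)
    [Module R Q] (hl : ∀ (r : R) (q : Q), r • q = φ r * q)
    (hflat : IsFlatLeftModule R Q)
    (M : Type u) [AddCommGroup M] [Module Rᵐᵒᵖ M]
    (htors : Subsingleton (NCTensor R M Q)) :
    letI : Module R (Kmod φ hr) := KleftModule φ hr
    letI : Module Rᵐᵒᵖ (Kmod φ hr →ₗ[Rᵐᵒᵖ] M) := homModule φ hr M
    ∃ π : NCTensor R (Kmod φ hr →ₗ[Rᵐᵒᵖ] M) (Kmod φ hr) →+ M,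
      (∀ (f : Kmod φ hr →ₗ[Rᵐᵒᵖ] M) (x : Kmod φ hr),
        π (NCTensor.tmul R (Kmod φ hr →ₗ[Rᵐᵒᵖ] M) (Kmod φ hr) f x) = f x) ∧
      (∀ (f : Kmod φ hr →ₗ[Rᵐᵒᵖ] M) (x : Kmod φ hr) (r : R),
        π (NCTensor.tmul R (Kmod φ hr →ₗ[Rᵐᵒᵖ] M) (Kmod φ hr) f ((op r : Rᵐᵒᵖ) • x)) =
          (op r : Rᵐᵒᵖ) • π (NCTensor.tmul R (Kmod φ hr →ₗ[Rᵐᵒᵖ] M) (Kmod φ hr) f x)) ∧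
      Set.range π = {m : M | ∃ g : Q →ₗ[Rᵐᵒᵖ] M, g 1 = m} := by
  refine ⟨evalTensor hr M, evalTensor_tmul hr M, fun f x r => ?_, ?_⟩
  · simp only [evalTensor_tmul, map_smul]
  · exact congrArg SetLike.coe (range_evalTensor hr M hl hflat)

/-- If `φ : R → Q` is an injective ring epimorphism with `Q` flat as a left `R`-module and
`K = Q/φ(R)`, then for every torsion right `R`-module `M` the canonical map
`π : Hom_R(K, M) ⊗_R K → h(M)`, `f ⊗ x ↦ f x`, is a surjective right `R`-module
homomorphism onto the largest h-divisible submodule `h(M)` of `M`. -/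
theorem canonical_map_onto_hM {R Q : Type u} [Ring R] [Ring Q] (φ : R →+* Q)
    (hinj : Function.Injective φ) (hepi : IsRingEpi φ)
    [Module Rᵐᵒᵖ Q] (hr : ∀ (r : R) (q : Q), op r • q = q * φ r)
    [Module R Q] (hl : ∀ (r : R) (q : Q), r • q = φ r * q)
    (hflat : IsFlatLeftModule R Q)
    (M : Type u) [AddCommGroup M] [Module Rᵐᵒᵖ M]
    (htors : Subsingleton (NCTensor R M Q)) :
    letI : Module R (Kmod φ hr) := KleftModule φ hr
    letI : Module Rᵐᵒᵖ (Kmod φ hr →ₗ[Rᵐᵒᵖ] M) := homModule φ hr M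
    ∃ π : NCTensor R (Kmod φ hr →ₗ[Rᵐᵒᵖ] M) (Kmod φ hr) →+ M,
      (∀ (f : Kmod φ hr →ₗ[Rᵐᵒᵖ] M) (x : Kmod φ hr),
        π (NCTensor.tmul R (Kmod φ hr →ₗ[Rᵐᵒᵖ] M) (Kmod φ hr) f x) = f x) ∧
      (∀ (f : Kmod φ hr →ₗ[Rᵐᵒᵖ] M) (x : Kmod φ hr) (r : R),
        π (NCTensor.tmul R (Kmod φ hr →ₗ[Rᵐᵒᵖ] M) (Kmod φ hr) f ((op r : Rᵐᵒᵖ) • x)) =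
          (op r : Rᵐᵒᵖ) • π (NCTensor.tmul R (Kmod φ hr →ₗ[Rᵐᵒᵖ] M) (Kmod φ hr) f x)) ∧
      Set.range π = {m : M | ∃ g : Q →ₗ[Rᵐᵒᵖ] M, g 1 = m} :=
  canonical_map_onto_hM_general φ hr hl hflat M htors
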